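/- arXiv:1804.04303 — 7 statements merged into one kernel-verified Lean document; each statement's English description precedes it below -/
import Mathlib

section
/- Let α : A → B be a de Vries extension. The set I_α of α-compact elements of A is an ideal of A: it contains 0, is downward closed, and is closed under binary joins. -/
/-- `a` is α-compact. -/
def IsAlphaCompact {A B : Type*} [CompleteBooleanAlgebra A] [CompleteBooleanAlgebra B]
    (α : A → B) (a : A) : Prop :=
  ∀ S : Set A, (α aᶜ)ᶜ ≤ sSup (α '' S) →
    ∃ T ⊆ S, T.Finite ∧ (α aᶜ)ᶜ ≤ sSup (α '' T)

/-! Write `a* := (α aᶜ)ᶜ`; `a` is α-compact when every cover of `a*` by elements of `α[A]` has a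
finite subcover. As `α` preserves meets, `(a ⊔ b)* = a* ⊔ b*`, so finite subcovers of `a*` and
`b*` combine. For `a ≤ b`, a cover of `a*` becomes a cover of `⊤ ≥ b*` once `aᶜ` is added; a
finite subcover of it for `b*` still covers `a* ≤ b*`, and `aᶜ` can then be dropped again because
`α aᶜ` is disjoint from `a*`. -/

namespace IsAlphaCompact

variable {A B : Type*} [CompleteBooleanAlgebra A] [CompleteBooleanAlgebra B] {α : A → B}
  {a b : A}

theorem bot (htop : α ⊤ = ⊤) : IsAlphaCompact α ⊥ :=
  fun S _ => ⟨∅, Set.empty_subset S, Set.finite_empty, by simp [htop]⟩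

theorem of_le (hmono : Monotone α) (hb : IsAlphaCompact α b) (hab : a ≤ b) :
    IsAlphaCompact α a := by
  intro S hS
  have hcover : (α bᶜ)ᶜ ≤ sSup (α '' insert aᶜ S) := by
    rw [Set.image_insert_eq, sSup_insert]
    exact le_top.trans (codisjoint_iff_compl_le_right.2 hS).top_le
  obtain ⟨T, hTS, hTfin, hT⟩ := hb _ hcover
  refine ⟨T \ {aᶜ}, Set.sdiff_singleton_subset_iff.2 hTS, hTfin.sdiff, ?_⟩
  have hle : (α aᶜ)ᶜ ≤ α aᶜ ⊔ sSup (α '' (T \ {aᶜ})) :=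
    calc (α aᶜ)ᶜ ≤ (α bᶜ)ᶜ := compl_le_compl (hmono (compl_le_compl hab))
      _ ≤ sSup (α '' T) := hT
      _ ≤ sSup (α '' insert aᶜ (T \ {aᶜ})) :=
        sSup_le_sSup (Set.image_mono (Set.subset_insert_sdiff_singleton _ _))
      _ = α aᶜ ⊔ sSup (α '' (T \ {aᶜ})) := by rw [Set.image_insert_eq, sSup_insert]
  exact disjoint_compl_left.left_le_of_le_sup_left hle

theorem sup (hinf : ∀ a b : A, α (a ⊓ b) = α a ⊓ α b) (ha : IsAlphaCompact α a)
    (hb : IsAlphaCompact α b) : IsAlphaCompact α (a ⊔ b) := by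
  intro S hS
  have hsplit : (α (a ⊔ b)ᶜ)ᶜ = (α aᶜ)ᶜ ⊔ (α bᶜ)ᶜ := by rw [compl_sup, hinf, compl_inf]
  rw [hsplit] at hS ⊢
  obtain ⟨Ta, hTaS, hTafin, hTa⟩ := ha S (le_sup_left.trans hS)
  obtain ⟨Tb, hTbS, hTbfin, hTb⟩ := hb S (le_sup_right.trans hS)
  refine ⟨Ta ∪ Tb, Set.union_subset hTaS hTbS, hTafin.union hTbfin, ?_⟩
  rw [Set.image_union, sSup_union]
  exact sup_le_sup hTa hTb

end IsAlphaCompact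

theorem stmt4_general {A B : Type*} [CompleteBooleanAlgebra A] [CompleteBooleanAlgebra B]
    (prec : A → A → Prop) (α : A → B)
    (dv1 : prec ⊤ ⊤)
    (m1 : α ⊥ = ⊥)
    (m2 : ∀ a b : A, α (a ⊓ b) = α a ⊓ α b)
    (m3 : ∀ a b : A, prec a b → (α aᶜ)ᶜ ≤ α b)
    :
    ⊥ ∈ {a : A | IsAlphaCompact α a} ∧
    (∀ a b : A, b ∈ {a : A | IsAlphaCompact α a} → a ≤ b → a ∈ {a : A | IsAlphaCompact α a}) ∧
    (∀ a b : A, IsAlphaCompact α a → IsAlphaCompact α b → IsAlphaCompact α (a ⊔ b)) := by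
  have htop : α ⊤ = ⊤ := top_le_iff.1 (by simpa [m1] using m3 ⊤ ⊤ dv1)
  have hmono : Monotone α := OrderHomClass.mono (⟨α, m2⟩ : InfHom A B)
  exact ⟨IsAlphaCompact.bot htop, fun _ _ hb hab => hb.of_le hmono hab,
    fun _ _ ha hb => ha.sup m2 hb⟩

theorem stmt4 {A B : Type*} [CompleteBooleanAlgebra A] [CompleteBooleanAlgebra B]
    [IsAtomic B] (prec : A → A → Prop) (α : A → B)
    (dv1 : prec ⊤ ⊤)
    (dv2 : ∀ a b : A, prec a b → a ≤ b)
    (dv3 : ∀ a b c d : A, a ≤ b → prec b c → c ≤ d → prec a d)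
    (dv4 : ∀ a b c : A, prec a b → prec a c → prec a (b ⊓ c))
    (dv5 : ∀ a b : A, prec a b → prec bᶜ aᶜ)
    (dv6 : ∀ a b : A, prec a b → ∃ c, prec a c ∧ prec c b)
    (dv7 : ∀ b : A, b = sSup {a : A | prec a b})
    (hinj : Function.Injective α)
    (m1 : α ⊥ = ⊥)
    (m2 : ∀ a b : A, α (a ⊓ b) = α a ⊓ α b)
    (m3 : ∀ a b : A, prec a b → (α aᶜ)ᶜ ≤ α b)
    (m4 : ∀ b : A, α b = sSup (α '' {a : A | prec a b}))
    (hdense : ∀ y : B, ∃ T : Set (Set A), y = sSup ((fun S => sInf (α '' S)) '' T))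
    :
    ⊥ ∈ {a : A | IsAlphaCompact α a} ∧
    (∀ a b : A, b ∈ {a : A | IsAlphaCompact α a} → a ≤ b → a ∈ {a : A | IsAlphaCompact α a}) ∧
    (∀ a b : A, IsAlphaCompact α a → IsAlphaCompact α b → IsAlphaCompact α (a ⊔ b)) :=
  stmt4_general prec α dv1 m1 m2 m3
end

section
/- Let α : A → B be a de Vries extension. If α is locally compact (i.e., α(b) = ⋁{α(a) | a ∈ I_α, a ≺ b} for all b ∈ A), then I_α is a round ideal of A and ⋁ α[I_α] = 1. -/
section Precedence

variable {A : Type*} {prec : A → A → Prop}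

theorem prec_bot [BooleanAlgebra A] (prec_top_top : prec ⊤ ⊤)
    (prec_mono : ∀ a b c d : A, a ≤ b → prec b c → c ≤ d → prec a d)
    (prec_compl : ∀ a b : A, prec a b → prec bᶜ aᶜ) (c : A) : prec ⊥ c := by
  have h := prec_compl _ _ prec_top_top
  rw [compl_top] at h
  exact prec_mono _ _ _ _ le_rfl h bot_le

theorem supClosed_setOf_prec [BooleanAlgebra A]
    (prec_inf : ∀ a b c : A, prec a b → prec a c → prec a (b ⊓ c))
    (prec_compl : ∀ a b : A, prec a b → prec bᶜ aᶜ) (c : A) : SupClosed {a | prec a c} := by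
  intro a ha b hb
  show prec (a ⊔ b) c
  simpa only [compl_inf, compl_compl] using
    prec_compl _ _ (prec_inf _ _ _ (prec_compl _ _ ha) (prec_compl _ _ hb))

theorem prec_sSup_of_finite [CompleteBooleanAlgebra A] (prec_top_top : prec ⊤ ⊤)
    (prec_mono : ∀ a b c d : A, a ≤ b → prec b c → c ≤ d → prec a d)
    (prec_inf : ∀ a b c : A, prec a b → prec a c → prec a (b ⊓ c))
    (prec_compl : ∀ a b : A, prec a b → prec bᶜ aᶜ) {T : Set A} {c : A} (hT : T.Finite)
    (hTc : ∀ t ∈ T, prec t c) : prec (sSup T) c :=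
  (supClosed_setOf_prec prec_inf prec_compl c).sSup_mem hT
    (prec_bot prec_top_top prec_mono prec_compl c) hTc

end Precedence

section InfPreserving

variable {A B : Type*} {α : A → B}

theorem monotone_of_map_inf [SemilatticeInf A] [SemilatticeInf B]
    (map_inf : ∀ a b, α (a ⊓ b) = α a ⊓ α b) : Monotone α := fun a b hab =>
  calc α a = α (a ⊓ b) := by rw [inf_eq_left.mpr hab]
    _ = α a ⊓ α b := map_inf a b
    _ ≤ α b := inf_le_right

theorem le_of_map_le_of_map_inf [SemilatticeInf A] [SemilatticeInf B]
    (hinj : Function.Injective α) (map_inf : ∀ a b, α (a ⊓ b) = α a ⊓ α b) {a b : A}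
    (h : α a ≤ α b) : a ≤ b :=
  inf_eq_left.mp (hinj (by rw [map_inf, inf_eq_left.mpr h]))

theorem map_le_compl_map_compl [BooleanAlgebra A] [BooleanAlgebra B] (map_bot : α ⊥ = ⊥)
    (map_inf : ∀ a b, α (a ⊓ b) = α a ⊓ α b) (a : A) : α a ≤ (α aᶜ)ᶜ :=
  le_compl_iff_disjoint_right.mpr
    (disjoint_iff.mpr (by rw [← map_inf, inf_compl_eq_bot, map_bot]))

end InfPreserving

section AlphaCompact

variable {A B : Type*} [CompleteBooleanAlgebra A] [CompleteBooleanAlgebra B] {α : A → B}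

theorem isAlphaCompact_bot (map_top : α ⊤ = ⊤) : IsAlphaCompact α ⊥ :=
  fun S _ => ⟨∅, Set.empty_subset S, Set.finite_empty, by simp [map_top]⟩

theorem IsAlphaCompact.of_le_s5 (hα : Monotone α) {a b : A} (hb : IsAlphaCompact α b)
    (hab : a ≤ b) : IsAlphaCompact α a := by
  intro S hS
  have hcompl : (α aᶜ)ᶜ ≤ (α bᶜ)ᶜ := compl_le_compl (hα (compl_le_compl hab))
  -- cover `(α bᶜ)ᶜ` by adjoining `aᶜ` to `S`, then drop `aᶜ` from the finite subcover again
  have hcover : (α bᶜ)ᶜ ≤ sSup (α '' insert aᶜ S) := by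
    rw [Set.image_insert_eq, sSup_insert]
    calc (α bᶜ)ᶜ ≤ α aᶜ ⊔ (α aᶜ)ᶜ := by simp
      _ ≤ α aᶜ ⊔ sSup (α '' S) := sup_le_sup_left hS _
  obtain ⟨T, hTS, hT, hbT⟩ := hb _ hcover
  refine ⟨T \ {aᶜ}, Set.sdiff_singleton_subset_iff.mpr hTS, hT.sdiff, ?_⟩
  have hdrop : sSup (α '' T) ≤ α aᶜ ⊔ sSup (α '' (T \ {aᶜ})) := by
    rw [← sSup_insert, ← Set.image_insert_eq, Set.insert_sdiff_singleton]
    exact sSup_le_sSup (Set.image_mono (Set.subset_insert _ _))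
  exact Disjoint.left_le_of_le_sup_left (hcompl.trans (hbT.trans hdrop)) disjoint_compl_left

theorem supClosed_isAlphaCompact (map_inf : ∀ a b, α (a ⊓ b) = α a ⊓ α b) :
    SupClosed {a | IsAlphaCompact α a} := by
  intro a ha b hb S hS
  have hsplit : (α (a ⊔ b)ᶜ)ᶜ = (α aᶜ)ᶜ ⊔ (α bᶜ)ᶜ := by rw [compl_sup, map_inf, compl_inf]
  rw [hsplit, sup_le_iff] at hS
  obtain ⟨Ta, hTaS, hTa, haTa⟩ := ha S hS.1
  obtain ⟨Tb, hTbS, hTb, hbTb⟩ := hb S hS.2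
  refine ⟨Ta ∪ Tb, Set.union_subset hTaS hTbS, hTa.union hTb, ?_⟩
  rw [hsplit, Set.image_union, sSup_union]
  exact sup_le_sup haTa hbTb

theorem IsAlphaCompact.exists_finite_le_map_sSup (hα : Monotone α) {a : A}
    (ha : IsAlphaCompact α a) {S : Set A} (hS : (α aᶜ)ᶜ ≤ sSup (α '' S)) :
    ∃ T ⊆ S, T.Finite ∧ (α aᶜ)ᶜ ≤ α (sSup T) := by
  obtain ⟨T, hTS, hT, haT⟩ := ha S hS
  exact ⟨T, hTS, hT, haT.trans (sSup_image (f := α) ▸ hα.le_map_sSup)⟩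

theorem IsAlphaCompact.exists_isAlphaCompact_prec {prec : A → A → Prop}
    (hinj : Function.Injective α) (map_bot : α ⊥ = ⊥) (map_top : α ⊤ = ⊤)
    (map_inf : ∀ a b, α (a ⊓ b) = α a ⊓ α b)
    (prec_of_le : ∀ {a b c : A}, a ≤ b → prec b c → prec a c)
    (prec_sSup : ∀ {T : Set A} {c : A}, T.Finite → (∀ t ∈ T, prec t c) → prec (sSup T) c)
    (hlc : ∀ b : A, α b = sSup (α '' {a : A | IsAlphaCompact α a ∧ prec a b}))
    (hcover : sSup (α '' {a : A | IsAlphaCompact α a}) = ⊤) {a : A}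
    (ha : IsAlphaCompact α a) : ∃ b, IsAlphaCompact α b ∧ prec a b := by
  have hα := monotone_of_map_inf map_inf
  obtain ⟨T, hTI, hT, haT⟩ := ha.exists_finite_le_map_sSup hα (hcover ▸ le_top)
  obtain ⟨T', hT'b, hT', haT'⟩ := ha.exists_finite_le_map_sSup hα (hlc (sSup T) ▸ haT)
  have hb : IsAlphaCompact α (sSup T) :=
    (supClosed_isAlphaCompact map_inf).sSup_mem hT (isAlphaCompact_bot map_top) hTI
  have haT'_le : a ≤ sSup T' :=
    le_of_map_le_of_map_inf hinj map_inf ((map_le_compl_map_compl map_bot map_inf a).trans haT')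
  exact ⟨sSup T, hb, prec_of_le haT'_le (prec_sSup hT' fun t ht => (hT'b ht).2)⟩

end AlphaCompact

theorem stmt5_general {A B : Type*} [CompleteBooleanAlgebra A] [CompleteBooleanAlgebra B]
    (prec : A → A → Prop) (α : A → B)
    (dv1 : prec ⊤ ⊤)
    (dv3 : ∀ a b c d : A, a ≤ b → prec b c → c ≤ d → prec a d)
    (dv4 : ∀ a b c : A, prec a b → prec a c → prec a (b ⊓ c))
    (dv5 : ∀ a b : A, prec a b → prec bᶜ aᶜ)
    (hinj : Function.Injective α)
    (m1 : α ⊥ = ⊥)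
    (m2 : ∀ a b : A, α (a ⊓ b) = α a ⊓ α b)
    (m3 : ∀ a b : A, prec a b → (α aᶜ)ᶜ ≤ α b)
    (hlc : ∀ b : A, α b = sSup (α '' {a : A | IsAlphaCompact α a ∧ prec a b})) :
    (⊥ ∈ {a : A | IsAlphaCompact α a} ∧
      (∀ a b : A, IsAlphaCompact α b → a ≤ b → IsAlphaCompact α a) ∧
      (∀ a b : A, IsAlphaCompact α a → IsAlphaCompact α b → IsAlphaCompact α (a ⊔ b))) ∧
    (∀ a : A, IsAlphaCompact α a → ∃ b : A, IsAlphaCompact α b ∧ prec a b) ∧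
    sSup (α '' {a : A | IsAlphaCompact α a}) = ⊤ := by
  have map_top : α ⊤ = ⊤ := top_le_iff.mp (by simpa [m1] using m3 ⊤ ⊤ dv1)
  have prec_top : ∀ a, prec a ⊤ := fun a => dv3 _ _ _ _ le_top dv1 le_rfl
  have hcover : sSup (α '' {a : A | IsAlphaCompact α a}) = ⊤ := by
    simpa only [prec_top, and_true, map_top] using (hlc ⊤).symm
  refine ⟨⟨isAlphaCompact_bot map_top, fun a b hb hab => hb.of_le_s5 (monotone_of_map_inf m2) hab,
    fun a b ha hb => supClosed_isAlphaCompact m2 ha hb⟩, fun a ha => ?_, hcover⟩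
  exact ha.exists_isAlphaCompact_prec hinj m1 map_top m2
    (@fun a b c hab hbc => dv3 a b c c hab hbc le_rfl) (prec_sSup_of_finite dv1 dv3 dv4 dv5) hlc hcover

theorem stmt5 {A B : Type*} [CompleteBooleanAlgebra A] [CompleteBooleanAlgebra B]
    [IsAtomic B] (prec : A → A → Prop) (α : A → B)
    (dv1 : prec ⊤ ⊤)
    (dv2 : ∀ a b : A, prec a b → a ≤ b)
    (dv3 : ∀ a b c d : A, a ≤ b → prec b c → c ≤ d → prec a d)
    (dv4 : ∀ a b c : A, prec a b → prec a c → prec a (b ⊓ c))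
    (dv5 : ∀ a b : A, prec a b → prec bᶜ aᶜ)
    (dv6 : ∀ a b : A, prec a b → ∃ c, prec a c ∧ prec c b)
    (dv7 : ∀ b : A, b = sSup {a : A | prec a b})
    (hinj : Function.Injective α)
    (m1 : α ⊥ = ⊥)
    (m2 : ∀ a b : A, α (a ⊓ b) = α a ⊓ α b)
    (m3 : ∀ a b : A, prec a b → (α aᶜ)ᶜ ≤ α b)
    (m4 : ∀ b : A, α b = sSup (α '' {a : A | prec a b}))
    (hdense : ∀ y : B, ∃ T : Set (Set A), y = sSup ((fun S => sInf (α '' S)) '' T))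
    (hlc : ∀ b : A, α b = sSup (α '' {a : A | IsAlphaCompact α a ∧ prec a b})) :
    (⊥ ∈ {a : A | IsAlphaCompact α a} ∧
      (∀ a b : A, IsAlphaCompact α b → a ≤ b → IsAlphaCompact α a) ∧
      (∀ a b : A, IsAlphaCompact α a → IsAlphaCompact α b → IsAlphaCompact α (a ⊔ b))) ∧
    (∀ a : A, IsAlphaCompact α a → ∃ b : A, IsAlphaCompact α b ∧ prec a b) ∧
    sSup (α '' {a : A | IsAlphaCompact α a}) = ⊤ :=
  stmt5_general prec α dv1 dv3 dv4 dv5 hinj m1 m2 m3 hlc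
end

section
/- Every compact de Vries extension is normal: if α : A → B is a de Vries extension such that for every round filter F and round ideal I of A with ⋀ α[F] ≤ ⋁ α[I] one has F ∩ I ≠ ∅, then for every such F and I there exist a, b ∈ A with a ≺ b, ⋀ α[F] ≤ α(a), and α(b) ≤ ⋁ α[I]. -/
theorem stmt6_general {A B : Type*} [CompleteBooleanAlgebra A] [CompleteBooleanAlgebra B]
    (prec : A → A → Prop) (α : A → B)
    (hcompact : ∀ F I : Set A,
      (F.Nonempty ∧ (∀ a b : A, a ∈ F → a ≤ b → b ∈ F) ∧ (∀ a b : A, a ∈ F → b ∈ F → a ⊓ b ∈ F)) →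
      (∀ b ∈ F, ∃ a ∈ F, prec a b) →
      (I.Nonempty ∧ (∀ a b : A, b ∈ I → a ≤ b → a ∈ I) ∧ (∀ a b : A, a ∈ I → b ∈ I → a ⊔ b ∈ I)) →
      (∀ a ∈ I, ∃ b ∈ I, prec a b) →
      sInf (α '' F) ≤ sSup (α '' I) → (F ∩ I).Nonempty) :
    ∀ F I : Set A,
      (F.Nonempty ∧ (∀ a b : A, a ∈ F → a ≤ b → b ∈ F) ∧ (∀ a b : A, a ∈ F → b ∈ F → a ⊓ b ∈ F)) →
      (∀ b ∈ F, ∃ a ∈ F, prec a b) →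
      (I.Nonempty ∧ (∀ a b : A, b ∈ I → a ≤ b → a ∈ I) ∧ (∀ a b : A, a ∈ I → b ∈ I → a ⊔ b ∈ I)) →
      (∀ a ∈ I, ∃ b ∈ I, prec a b) →
      sInf (α '' F) ≤ sSup (α '' I) →
      ∃ a b : A, prec a b ∧ sInf (α '' F) ≤ α a ∧ α b ≤ sSup (α '' I) := by
  intro F I hF hFround hI hIround hle
  obtain ⟨c, hcF, hcI⟩ := hcompact F I hF hFround hI hIround hle
  obtain ⟨a, haF, hac⟩ := hFround c hcF
  exact ⟨a, c, hac, sInf_le ⟨a, haF, rfl⟩, le_sSup ⟨c, hcI, rfl⟩⟩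

theorem stmt6 {A B : Type*} [CompleteBooleanAlgebra A] [CompleteBooleanAlgebra B]
    [IsAtomic B] (prec : A → A → Prop) (α : A → B)
    (dv1 : prec ⊤ ⊤)
    (dv2 : ∀ a b : A, prec a b → a ≤ b)
    (dv3 : ∀ a b c d : A, a ≤ b → prec b c → c ≤ d → prec a d)
    (dv4 : ∀ a b c : A, prec a b → prec a c → prec a (b ⊓ c))
    (dv5 : ∀ a b : A, prec a b → prec bᶜ aᶜ)
    (dv6 : ∀ a b : A, prec a b → ∃ c, prec a c ∧ prec c b)
    (dv7 : ∀ b : A, b = sSup {a : A | prec a b})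
    (hinj : Function.Injective α)
    (m1 : α ⊥ = ⊥)
    (m2 : ∀ a b : A, α (a ⊓ b) = α a ⊓ α b)
    (m3 : ∀ a b : A, prec a b → (α aᶜ)ᶜ ≤ α b)
    (m4 : ∀ b : A, α b = sSup (α '' {a : A | prec a b}))
    (hdense : ∀ y : B, ∃ T : Set (Set A), y = sSup ((fun S => sInf (α '' S)) '' T))
    (hcompact : ∀ F I : Set A,
      (F.Nonempty ∧ (∀ a b : A, a ∈ F → a ≤ b → b ∈ F) ∧ (∀ a b : A, a ∈ F → b ∈ F → a ⊓ b ∈ F)) →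
      (∀ b ∈ F, ∃ a ∈ F, prec a b) →
      (I.Nonempty ∧ (∀ a b : A, b ∈ I → a ≤ b → a ∈ I) ∧ (∀ a b : A, a ∈ I → b ∈ I → a ⊔ b ∈ I)) →
      (∀ a ∈ I, ∃ b ∈ I, prec a b) →
      sInf (α '' F) ≤ sSup (α '' I) → (F ∩ I).Nonempty) :
    ∀ F I : Set A,
      (F.Nonempty ∧ (∀ a b : A, a ∈ F → a ≤ b → b ∈ F) ∧ (∀ a b : A, a ∈ F → b ∈ F → a ⊓ b ∈ F)) →
      (∀ b ∈ F, ∃ a ∈ F, prec a b) →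
      (I.Nonempty ∧ (∀ a b : A, b ∈ I → a ≤ b → a ∈ I) ∧ (∀ a b : A, a ∈ I → b ∈ I → a ⊔ b ∈ I)) →
      (∀ a ∈ I, ∃ b ∈ I, prec a b) →
      sInf (α '' F) ≤ sSup (α '' I) →
      ∃ a b : A, prec a b ∧ sInf (α '' F) ≤ α a ∧ α b ≤ sSup (α '' I) :=
  stmt6_general prec α hcompact
end

section
/- Let (A, ◁, I) be a Dimov algebra and suppose axiom (∗) holds: if a ◁ (b ∨ ¬c) for all c ∈ I, then a ◁ b. Then axiom (I2) holds: if (a ∧ c) ◁ (b ∨ ¬c) for all c ∈ I, then a ◁ b. -/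
/-! Fix `c ∈ I`. Applying `(∗)` to the pair `(bᶜ ⊓ c, aᶜ)` and using that `I` is closed under
joins, the hypothesis at `c ⊔ d` (dualised by (DV5)) yields `bᶜ ⊓ c ◁ aᶜ ⊔ dᶜ` for every
`d ∈ I`, hence `bᶜ ⊓ c ◁ aᶜ`. Dualising once more gives `a ◁ b ⊔ cᶜ` for every `c ∈ I`,
and a last application of `(∗)` gives `a ◁ b`. -/

section

variable {A : Type*} [BooleanAlgebra A] {lhd : A → A → Prop} {I : Set A}

lemma compl_inf_lhd_compl_of_forall_inf_lhd
    (dv3 : ∀ a b c d : A, a ≤ b → lhd b c → c ≤ d → lhd a d)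
    (dv5 : ∀ a b : A, lhd a b → lhd bᶜ aᶜ)
    (hjoin : ∀ a b : A, a ∈ I → b ∈ I → a ⊔ b ∈ I)
    (star : ∀ a b : A, (∀ c ∈ I, lhd a (b ⊔ cᶜ)) → lhd a b)
    {a b c : A} (h : ∀ c ∈ I, lhd (a ⊓ c) (b ⊔ cᶜ)) (hc : c ∈ I) :
    lhd (bᶜ ⊓ c) aᶜ := by
  refine star _ _ fun d hd => ?_
  have hdual : lhd (b ⊔ (c ⊔ d)ᶜ)ᶜ (a ⊓ (c ⊔ d))ᶜ := dv5 _ _ (h _ (hjoin c d hc hd))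
  refine dv3 _ _ _ _ ?_ hdual ?_
  · rw [compl_sup, compl_compl]
    exact inf_le_inf_left _ le_sup_left
  · rw [compl_inf, compl_sup]
    exact sup_le_sup_left inf_le_right _

end

theorem stmt10_general {A : Type*} [CompleteBooleanAlgebra A] (lhd : A → A → Prop) (I : Set A)
    (dv3 : ∀ a b c d : A, a ≤ b → lhd b c → c ≤ d → lhd a d)
    (dv5 : ∀ a b : A, lhd a b → lhd bᶜ aᶜ)
    (hjoin : ∀ a b : A, a ∈ I → b ∈ I → a ⊔ b ∈ I)
    (star : ∀ a b : A, (∀ c ∈ I, lhd a (b ⊔ cᶜ)) → lhd a b) :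
    ∀ a b : A, (∀ c ∈ I, lhd (a ⊓ c) (b ⊔ cᶜ)) → lhd a b := by
  intro a b h
  refine star a b fun c hc => ?_
  simpa using dv5 _ _ (compl_inf_lhd_compl_of_forall_inf_lhd dv3 dv5 hjoin star h hc)

theorem stmt10 {A : Type*} [CompleteBooleanAlgebra A] (lhd : A → A → Prop) (I : Set A)
    (dv1 : lhd ⊤ ⊤)
    (dv2 : ∀ a b : A, lhd a b → a ≤ b)
    (dv3 : ∀ a b c d : A, a ≤ b → lhd b c → c ≤ d → lhd a d)
    (dv4 : ∀ a b c : A, lhd a b → lhd a c → lhd a (b ⊓ c))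
    (dv5 : ∀ a b : A, lhd a b → lhd bᶜ aᶜ)
    (hne : I.Nonempty)
    (hdown : ∀ a b : A, b ∈ I → a ≤ b → a ∈ I)
    (hjoin : ∀ a b : A, a ∈ I → b ∈ I → a ⊔ b ∈ I)
    (star : ∀ a b : A, (∀ c ∈ I, lhd a (b ⊔ cᶜ)) → lhd a b) :
    ∀ a b : A, (∀ c ∈ I, lhd (a ⊓ c) (b ⊔ cᶜ)) → lhd a b :=
  stmt10_general lhd I dv3 dv5 hjoin star
end

section
/- Let (A, ◁, I) be a Dimov algebra and define a ≺ b iff there is a family {c_p | p ∈ ℚ ∩ [0,1]} with a ≤ c₀, c₁ ≤ b, and c_p ◁ c_q whenever p < q. Then ≺ satisfies the de Vries axioms (DV1)–(DV7); in particular (A, ≺) is a de Vries algebra. -/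
/-!
Axioms (DV1)–(DV6) for `≺` are inherited from those of `◁` chain by chain: constant chains,
pointwise meets and complements of chains, and the two halves of a chain. Only (DV7) needs the
ideal. If `b` were strictly above `⋁ {a | a ≺ b}`, then (I3) would give a nonzero `a ∈ I` with
`a ◁ b` below the difference. Starting from `a ◁ b`, (I1) lets one insert interpolants one rational
at a time along an enumeration of `ℚ`, keeping every value below the top in `I`, as in the proof of
Urysohn's lemma; this gives `a ≺ b`, a contradiction.
-/

open Finset

section RatChain

variable {A : Type*} {R : A → A → Prop} {I : Set A}

def IsRatChain (R : A → A → Prop) (c : ℚ → A) : Prop :=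
  ∀ p q : ℚ, 0 ≤ p → p < q → q ≤ 1 → R (c p) (c q)

def RatChainRel [LE A] (R : A → A → Prop) (a b : A) : Prop :=
  ∃ c : ℚ → A, a ≤ c 0 ∧ c 1 ≤ b ∧ IsRatChain R c

def IsRatChainOn (R : A → A → Prop) (I : Set A) (s : Finset ℚ) (c : ℚ → A) : Prop :=
  (∀ p ∈ s, 0 ≤ p → p < 1 → c p ∈ I) ∧
    ∀ p ∈ s, ∀ q ∈ s, 0 ≤ p → p < q → q ≤ 1 → R (c p) (c q)

theorem IsRatChain.comp_affine {c : ℚ → A} (hc : IsRatChain R c) {u v : ℚ} (hu : 0 ≤ u)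
    (huv : u < v) (hv : v ≤ 1) : IsRatChain R fun p => c (u + (v - u) * p) :=
  fun p q hp hpq hq => hc _ _ (by nlinarith) (by nlinarith) (by nlinarith)

theorem IsRatChainOn.exists_extend (htrans : ∀ a b c, R a b → R b c → R a c)
    (hI : ∀ a b, a ∈ I → R a b → ∃ c ∈ I, R a c ∧ R c b) {s : Finset ℚ} {c : ℚ → A}
    (hc : IsRatChainOn R I s c) (h0 : 0 ∈ s) (h1 : 1 ∈ s) (r : ℚ) :
    ∃ c' : ℚ → A, IsRatChainOn R I (insert r s) c' ∧ Set.EqOn c' c s := by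
  classical
  by_cases hr : r ∈ s ∨ r < 0 ∨ 1 < r
  · refine ⟨c, ⟨fun p hp hp0 hp1 => ?_, fun p hp q hq hp0 hpq hq1 => ?_⟩, Set.eqOn_refl _ _⟩
    · rcases mem_insert.1 hp with rfl | hp
      · exact hc.1 p (hr.resolve_right (by grind)) hp0 hp1
      · exact hc.1 p hp hp0 hp1
    · have mem : ∀ t ∈ insert r s, 0 ≤ t → t ≤ 1 → t ∈ s := fun t ht ht0 ht1 =>
        (mem_insert.1 ht).elim (fun htr => htr ▸ hr.resolve_right (by grind)) id
      exact hc.2 p (mem p hp hp0 (by linarith)) q (mem q hq (by linarith) hq1) hp0 hpq hq1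
  push Not at hr
  obtain ⟨hrs, hr0, hr1⟩ := hr
  have hlo_ne : (s.filter (· < r)).Nonempty :=
    ⟨0, mem_filter.2 ⟨h0, lt_of_le_of_ne hr0 (ne_of_mem_of_not_mem h0 hrs)⟩⟩
  have hhi_ne : (s.filter (r < ·)).Nonempty :=
    ⟨1, mem_filter.2 ⟨h1, lt_of_le_of_ne hr1 (ne_of_mem_of_not_mem h1 hrs).symm⟩⟩
  set lo := (s.filter (· < r)).max' hlo_ne
  set hi := (s.filter (r < ·)).min' hhi_ne
  obtain ⟨hlo, hlo_r⟩ := mem_filter.1 ((s.filter (· < r)).max'_mem hlo_ne)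
  obtain ⟨hhi, hr_hi⟩ := mem_filter.1 ((s.filter (r < ·)).min'_mem hhi_ne)
  have le_lo : ∀ p ∈ s, p < r → p ≤ lo := fun p hp hpr => le_max' _ p (mem_filter.2 ⟨hp, hpr⟩)
  have hi_le : ∀ q ∈ s, r < q → hi ≤ q := fun q hq hrq => min'_le _ q (mem_filter.2 ⟨hq, hrq⟩)
  have hlo0 : 0 ≤ lo := le_lo 0 h0 (lt_of_le_of_ne hr0 (ne_of_mem_of_not_mem h0 hrs))
  have hhi1 : hi ≤ 1 := hi_le 1 h1 (lt_of_le_of_ne hr1 (ne_of_mem_of_not_mem h1 hrs).symm)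
  obtain ⟨m, hmI, hlo_m, hm_hi⟩ :=
    hI _ _ (hc.1 lo hlo hlo0 (by linarith)) (hc.2 lo hlo hi hhi hlo0 (by linarith) hhi1)
  have below : ∀ p ∈ s, 0 ≤ p → p < r → R (c p) m := fun p hp hp0 hpr =>
    (le_lo p hp hpr).eq_or_lt.elim (fun h => h ▸ hlo_m)
      fun h => htrans _ _ _ (hc.2 p hp lo hlo hp0 h (by linarith)) hlo_m
  have above : ∀ q ∈ s, r < q → q ≤ 1 → R m (c q) := fun q hq hrq hq1 =>
    (hi_le q hq hrq).eq_or_lt.elim (fun h => h ▸ hm_hi)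
      fun h => htrans _ _ _ hm_hi (hc.2 hi hhi q hq (by linarith) h hq1)
  have update_eq : ∀ p ∈ s, Function.update c r m p = c p := fun p hp =>
    Function.update_of_ne (ne_of_mem_of_not_mem hp hrs) _ _
  refine ⟨Function.update c r m, ⟨fun p hp hp0 hp1 => ?_, fun p hp q hq hp0 hpq hq1 => ?_⟩,
    update_eq⟩
  · rcases mem_insert.1 hp with rfl | hp
    · rwa [Function.update_self]
    · rw [update_eq p hp]; exact hc.1 p hp hp0 hp1
  · rcases mem_insert.1 hp with rfl | hps <;> rcases mem_insert.1 hq with rfl | hqs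
    · exact absurd hpq (lt_irrefl _)
    · rw [Function.update_self, update_eq q hqs]; exact above q hqs hpq hq1
    · rw [Function.update_self, update_eq p hps]; exact below p hps hp0 hpq
    · rw [update_eq p hps, update_eq q hqs]; exact hc.2 p hps q hqs hp0 hpq hq1

theorem isRatChainOn_pair {a b : A} (ha : a ∈ I) (hab : R a b) :
    IsRatChainOn R I {0, 1} (Function.update (fun _ => a) 1 b) := by
  refine ⟨fun p hp hp0 hp1 => ?_, fun p hp q hq hp0 hpq hq1 => ?_⟩
  · obtain rfl : p = 0 := by simp at hp; grind
    simpa using ha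
  · obtain rfl : p = 0 := by simp at hp; grind
    obtain rfl : q = 1 := by simp at hq; grind
    simpa using hab

theorem exists_isRatChain (htrans : ∀ a b c, R a b → R b c → R a c)
    (hI : ∀ a b, a ∈ I → R a b → ∃ c ∈ I, R a c ∧ R c b) {a b : A} (ha : a ∈ I) (hab : R a b) :
    ∃ c : ℚ → A, c 0 = a ∧ c 1 = b ∧ IsRatChain R c := by
  classical
  -- made unconditional, so that `choose` yields an extension step that `Nat.rec` can iterate
  have step : ∀ (s : Finset ℚ) (c : ℚ → A) (r : ℚ), ∃ c' : ℚ → A, 0 ∈ s → 1 ∈ s →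
      IsRatChainOn R I s c → IsRatChainOn R I (insert r s) c' ∧ Set.EqOn c' c s := by
    intro s c r
    by_cases h : 0 ∈ s ∧ 1 ∈ s ∧ IsRatChainOn R I s c
    · obtain ⟨c', hc'⟩ := h.2.2.exists_extend htrans hI h.1 h.2.1 r
      exact ⟨c', fun _ _ _ => hc'⟩
    · exact ⟨c, fun h0 h1 hc => absurd ⟨h0, h1, hc⟩ h⟩
  choose extend hextend using step
  let e : ℕ ≃ ℚ := (Denumerable.eqv ℚ).symm
  let s : ℕ → Finset ℚ := fun n => {0, 1} ∪ (range n).image e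
  have hs_succ : ∀ n, s (n + 1) = insert (e n) (s n) := fun n => by
    ext; simp only [s, range_add_one, image_insert, mem_union, mem_insert]; tauto
  have hs_mono : Monotone s := fun m n hmn =>
    union_subset_union le_rfl (image_subset_image (range_subset_range.2 hmn))
  have hs_encode : ∀ q n, e.symm q < n → q ∈ s n := fun q n hn =>
    mem_union_right _ (mem_image.2 ⟨_, mem_range.2 hn, e.apply_symm_apply q⟩)
  let c : ℕ → ℚ → A := fun n =>
    Nat.rec (Function.update (fun _ => a) 1 b) (fun n cn => extend (s n) cn (e n)) n
  have hc : ∀ n, IsRatChainOn R I (s n) (c n) ∧ ∀ m ≤ n, Set.EqOn (c n) (c m) (s m) := by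
    intro n
    induction n with
    | zero =>
      refine ⟨(show s 0 = {0, 1} by simp [s]) ▸ isRatChainOn_pair ha hab, fun m hm => ?_⟩
      rw [Nat.le_zero.1 hm]
      exact Set.eqOn_refl _ _
    | succ n ih =>
      obtain ⟨hchain, hext⟩ := hextend (s n) (c n) (e n) (by simp [s]) (by simp [s]) ih.1
      refine ⟨hs_succ n ▸ hchain, fun m hm => ?_⟩
      rcases hm.eq_or_lt with rfl | hm
      · exact Set.eqOn_refl _ _
      · exact (hext.mono (hs_mono (Nat.lt_succ_iff.1 hm))).trans (ih.2 m (Nat.lt_succ_iff.1 hm))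
  let f : ℚ → A := fun q => c (e.symm q + 1) q
  have hf : ∀ q n, e.symm q < n → f q = c n q := fun q n hn =>
    ((hc n).2 _ hn (hs_encode q _ (Nat.lt_succ_self _))).symm
  refine ⟨f, ?_, ?_, fun p q hp0 hpq hq1 => ?_⟩
  · have hc0 : c 0 0 = a := by simp [c]
    exact ((hc (e.symm (0 : ℚ) + 1)).2 0 (Nat.zero_le _) (by simp [s])).trans hc0
  · have hc0 : c 0 1 = b := by simp [c]
    exact ((hc (e.symm (1 : ℚ) + 1)).2 0 (Nat.zero_le _) (by simp [s])).trans hc0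
  · set N := max (e.symm p) (e.symm q) + 1
    have hpN : e.symm p < N := Nat.lt_succ_of_le (le_max_left _ _)
    have hqN : e.symm q < N := Nat.lt_succ_of_le (le_max_right _ _)
    rw [hf p N hpN, hf q N hqN]
    exact (hc N).1.2 p (hs_encode p N hpN) q (hs_encode q N hqN) hp0 hpq hq1

end RatChain

namespace RatChainRel

variable {A : Type*} {R : A → A → Prop}

section Preorder

variable [Preorder A]

theorem of_rel_self {b : A} (h : R b b) : RatChainRel R b b :=
  ⟨fun _ => b, le_rfl, le_rfl, fun _ _ _ _ _ => h⟩

theorem le (hR : ∀ a b, R a b → a ≤ b) {a b : A} (h : RatChainRel R a b) : a ≤ b := by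
  obtain ⟨c, ha, hb, hc⟩ := h
  exact ha.trans ((hR _ _ (hc 0 1 le_rfl zero_lt_one le_rfl)).trans hb)

theorem of_le_of_le {a b c d : A} (hab : a ≤ b) (h : RatChainRel R b c) (hcd : c ≤ d) :
    RatChainRel R a d := by
  obtain ⟨f, hb, hc, hf⟩ := h
  exact ⟨f, hab.trans hb, hc.trans hcd, hf⟩

theorem exists_between {a b : A} (h : RatChainRel R a b) :
    ∃ c, RatChainRel R a c ∧ RatChainRel R c b := by
  obtain ⟨f, ha, hb, hf⟩ := h
  refine ⟨f (1 / 2), ⟨_, ?_, ?_, hf.comp_affine le_rfl one_half_pos one_half_lt_one.le⟩,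
    ⟨_, ?_, ?_, hf.comp_affine one_half_pos.le one_half_lt_one le_rfl⟩⟩ <;> norm_num [ha, hb]

theorem of_mem_of_rel {I : Set A} (htrans : ∀ a b c, R a b → R b c → R a c)
    (hI : ∀ a b, a ∈ I → R a b → ∃ c ∈ I, R a c ∧ R c b) {a b : A} (ha : a ∈ I) (hab : R a b) :
    RatChainRel R a b := by
  obtain ⟨c, hc0, hc1, hc⟩ := exists_isRatChain htrans hI ha hab
  exact ⟨c, hc0.ge, hc1.le, hc⟩

end Preorder

theorem inf [SemilatticeInf A] (mono : ∀ a b c d : A, a ≤ b → R b c → c ≤ d → R a d)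
    (hinf : ∀ a b c : A, R a b → R a c → R a (b ⊓ c)) {a b c : A}
    (hb : RatChainRel R a b) (hc : RatChainRel R a c) : RatChainRel R a (b ⊓ c) := by
  obtain ⟨f, hf0, hf1, hf⟩ := hb
  obtain ⟨g, hg0, hg1, hg⟩ := hc
  refine ⟨f ⊓ g, le_inf hf0 hg0, inf_le_inf hf1 hg1, fun p q hp hpq hq => hinf _ _ _ ?_ ?_⟩
  · exact mono _ _ _ _ inf_le_left (hf p q hp hpq hq) le_rfl
  · exact mono _ _ _ _ inf_le_right (hg p q hp hpq hq) le_rfl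

theorem compl [BooleanAlgebra A] (hcompl : ∀ a b : A, R a b → R bᶜ aᶜ) {a b : A}
    (h : RatChainRel R a b) : RatChainRel R bᶜ aᶜ := by
  obtain ⟨f, ha, hb, hf⟩ := h
  refine ⟨fun p => (f (1 - p))ᶜ, by simpa using hb, by simpa using ha,
    fun p q hp hpq hq => hcompl _ _ (hf _ _ (by linarith) (by linarith) (by linarith))⟩

end RatChainRel

theorem eq_sSup_ratChainRel {A : Type*} [CompleteBooleanAlgebra A] {R : A → A → Prop}
    {I : Set A} (hle : ∀ a b : A, R a b → a ≤ b)
    (mono : ∀ a b c d : A, a ≤ b → R b c → c ≤ d → R a d)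
    (hI : ∀ a b, a ∈ I → R a b → ∃ c ∈ I, R a c ∧ R c b)
    (hdense : ∀ b : A, b ≠ ⊥ → ∃ a ∈ I, a ≠ ⊥ ∧ R a b) (b : A) :
    b = sSup {a | RatChainRel R a b} := by
  set S := sSup {a | RatChainRel R a b}
  refine le_antisymm ?_ (sSup_le fun a ha => ha.le hle)
  by_contra hbS
  obtain ⟨a, haI, ha_ne, ha⟩ := hdense (b \ S) (mt sdiff_eq_bot_iff.1 hbS)
  have htrans : ∀ x y z, R x y → R y z → R x z := fun x y z hxy hyz =>
    mono x y z z (hle x y hxy) hyz le_rfl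
  have hab : RatChainRel R a b :=
    .of_mem_of_rel htrans hI haI (mono _ _ _ _ le_rfl ha sdiff_le)
  exact ha_ne ((le_sdiff.1 (hle _ _ ha)).2.eq_bot_of_le (le_sSup hab))

theorem stmt11_general {A : Type*} [CompleteBooleanAlgebra A] (lhd : A → A → Prop) (I : Set A)
    (dv1 : lhd ⊤ ⊤)
    (dv2 : ∀ a b : A, lhd a b → a ≤ b)
    (dv3 : ∀ a b c d : A, a ≤ b → lhd b c → c ≤ d → lhd a d)
    (dv4 : ∀ a b c : A, lhd a b → lhd a c → lhd a (b ⊓ c))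
    (dv5 : ∀ a b : A, lhd a b → lhd bᶜ aᶜ)
    (i1 : ∀ a b : A, a ∈ I → lhd a b → ∃ c ∈ I, lhd a c ∧ lhd c b)
    (i3 : ∀ b : A, b ≠ ⊥ → ∃ a ∈ I, a ≠ ⊥ ∧ lhd a b)
    (prec : A → A → Prop)
    (hprec : ∀ a b : A, prec a b ↔ ∃ c : ℚ → A, a ≤ c 0 ∧ c 1 ≤ b ∧
      ∀ p q : ℚ, 0 ≤ p → p < q → q ≤ 1 → lhd (c p) (c q))
    :
    prec ⊤ ⊤ ∧
    (∀ a b : A, prec a b → a ≤ b) ∧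
    (∀ a b c d : A, a ≤ b → prec b c → c ≤ d → prec a d) ∧
    (∀ a b c : A, prec a b → prec a c → prec a (b ⊓ c)) ∧
    (∀ a b : A, prec a b → prec bᶜ aᶜ) ∧
    (∀ a b : A, prec a b → ∃ c, prec a c ∧ prec c b) ∧
    (∀ b : A, b = sSup {a : A | prec a b}) := by
  obtain rfl : prec = RatChainRel lhd := by
    ext a b
    exact hprec a b
  exact ⟨.of_rel_self dv1, fun _ _ => RatChainRel.le dv2, fun _ _ _ _ => .of_le_of_le,
    fun _ _ _ => RatChainRel.inf dv3 dv4, fun _ _ => RatChainRel.compl dv5,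
    fun _ _ => RatChainRel.exists_between, eq_sSup_ratChainRel dv2 dv3 i1 i3⟩

theorem stmt11 {A : Type*} [CompleteBooleanAlgebra A] (lhd : A → A → Prop) (I : Set A)
    (dv1 : lhd ⊤ ⊤)
    (dv2 : ∀ a b : A, lhd a b → a ≤ b)
    (dv3 : ∀ a b c d : A, a ≤ b → lhd b c → c ≤ d → lhd a d)
    (dv4 : ∀ a b c : A, lhd a b → lhd a c → lhd a (b ⊓ c))
    (dv5 : ∀ a b : A, lhd a b → lhd bᶜ aᶜ)
    (hne : I.Nonempty)
    (hdown : ∀ a b : A, b ∈ I → a ≤ b → a ∈ I)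
    (hjoin : ∀ a b : A, a ∈ I → b ∈ I → a ⊔ b ∈ I)
    (i1 : ∀ a b : A, a ∈ I → lhd a b → ∃ c ∈ I, lhd a c ∧ lhd c b)
    (i2 : ∀ a b : A, (∀ c ∈ I, lhd (a ⊓ c) (b ⊔ cᶜ)) → lhd a b)
    (i3 : ∀ b : A, b ≠ ⊥ → ∃ a ∈ I, a ≠ ⊥ ∧ lhd a b)
    (prec : A → A → Prop)
    (hprec : ∀ a b : A, prec a b ↔ ∃ c : ℚ → A, a ≤ c 0 ∧ c 1 ≤ b ∧
      ∀ p q : ℚ, 0 ≤ p → p < q → q ≤ 1 → lhd (c p) (c q))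
    :
    prec ⊤ ⊤ ∧
    (∀ a b : A, prec a b → a ≤ b) ∧
    (∀ a b c d : A, a ≤ b → prec b c → c ≤ d → prec a d) ∧
    (∀ a b c : A, prec a b → prec a c → prec a (b ⊓ c)) ∧
    (∀ a b : A, prec a b → prec bᶜ aᶜ) ∧
    (∀ a b : A, prec a b → ∃ c, prec a c ∧ prec c b) ∧
    (∀ b : A, b = sSup {a : A | prec a b}) :=
  stmt11_general lhd I dv1 dv2 dv3 dv4 dv5 i1 i3 prec hprec
end

section
/- In a Dimov algebra (A, ◁, I), with ≺ the interpolating relation defined via rational-indexed interpolating sequences for ◁, the ideal I is round with respect to ≺ (every a ∈ I satisfies a ≺ b for some b ∈ I) and ⋁ I = 1. -/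
/-!
For `a ∈ I`, (I1) applied to `a ◁ 1` gives `b ∈ I` with `a ◁ b`, and iterating (I1) fills in a
chain `a ◁ c_p ◁ c_q ◁ b` indexed by the rationals of `[0,1]`. The chain is the union of a generic
sequence (Rasiowa–Sikorski) in the preorder of finite partial chains: a finite chain extends to any
new rational in `(0,1)` by interpolating, with (I1), between its two neighbours. Finally `⋁ I = 1`,
since otherwise (I3) yields a nonzero `a ∈ I` with `a ◁ ¬⋁ I`, whence `a ≤ ⋁ I ∧ ¬⋁ I = 0`.
-/

/-- A finite approximation of a chain `c : ℚ → α` with `c p ⟨r⟩ c q` for `0 ≤ p < q ≤ 1`.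
The values below `1` satisfy `P`, which is what lets us interpolate further. -/
structure PartialRatChain {α : Type*} (r : α → α → Prop) (P : α → Prop) where
  support : Finset ℚ
  toFun : ℚ → α
  zero_mem : 0 ∈ support
  one_mem : 1 ∈ support
  rel : ∀ p ∈ support, ∀ q ∈ support, 0 ≤ p → p < q → q ≤ 1 → r (toFun p) (toFun q)
  pred : ∀ p ∈ support, 0 ≤ p → p < 1 → P (toFun p)

namespace PartialRatChain

variable {α : Type*} {r : α → α → Prop} {P : α → Prop}

instance : Preorder (PartialRatChain r P) where
  le x y := x.support ⊆ y.support ∧ ∀ q ∈ x.support, x.toFun q = y.toFun q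
  le_refl _ := ⟨subset_rfl, fun _ _ => rfl⟩
  le_trans _ _ _ hxy hyz :=
    ⟨hxy.1.trans hyz.1, fun q hq => (hxy.2 q hq).trans (hyz.2 q (hxy.1 hq))⟩

theorem toFun_eq_of_le {x y : PartialRatChain r P} (h : x ≤ y) {q : ℚ} (hq : q ∈ x.support) :
    x.toFun q = y.toFun q :=
  h.2 q hq

variable (r P) in
def pair {a b : α} (ha : P a) (hab : r a b) : PartialRatChain r P where
  support := {0, 1}
  toFun := Function.update (fun _ => b) 0 a
  zero_mem := by simp
  one_mem := by simp
  rel p hp q hq _ hpq _ := by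
    simp only [Finset.mem_insert, Finset.mem_singleton] at hp hq
    rcases hp with rfl | rfl <;> rcases hq with rfl | rfl <;> norm_num at hpq
    simpa using hab
  pred p hp _ hp1 := by
    simp only [Finset.mem_insert, Finset.mem_singleton] at hp
    rcases hp with rfl | rfl
    · simpa using ha
    · norm_num at hp1

def insert (x : PartialRatChain r P) (q : ℚ) (hq : q ∉ x.support) (z : α)
    (hlo : ∀ p ∈ x.support, 0 ≤ p → p < q → q ≤ 1 → r (x.toFun p) z)
    (hhi : ∀ p ∈ x.support, 0 ≤ q → q < p → p ≤ 1 → r z (x.toFun p))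
    (hz : 0 ≤ q → q < 1 → P z) : PartialRatChain r P where
  support := Insert.insert q x.support
  toFun := Function.update x.toFun q z
  zero_mem := Finset.mem_insert_of_mem x.zero_mem
  one_mem := Finset.mem_insert_of_mem x.one_mem
  rel p hp p' hp' h0 hpp' h1 := by
    rcases Finset.mem_insert.1 hp with rfl | hps <;>
      rcases Finset.mem_insert.1 hp' with rfl | hps'
    · exact absurd hpp' (lt_irrefl _)
    · rw [Function.update_self, Function.update_of_ne (ne_of_mem_of_not_mem hps' hq)]
      exact hhi p' hps' h0 hpp' h1
    · rw [Function.update_self, Function.update_of_ne (ne_of_mem_of_not_mem hps hq)]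
      exact hlo p hps h0 hpp' h1
    · rw [Function.update_of_ne (ne_of_mem_of_not_mem hps hq),
        Function.update_of_ne (ne_of_mem_of_not_mem hps' hq)]
      exact x.rel p hps p' hps' h0 hpp' h1
  pred p hp h0 h1 := by
    rcases Finset.mem_insert.1 hp with rfl | hps
    · rw [Function.update_self]
      exact hz h0 h1
    · rw [Function.update_of_ne (ne_of_mem_of_not_mem hps hq)]
      exact x.pred p hps h0 h1

theorem le_insert (x : PartialRatChain r P) (q : ℚ) (hq : q ∉ x.support) (z : α) {hlo hhi hz} :
    x ≤ x.insert q hq z hlo hhi hz :=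
  ⟨Finset.subset_insert _ _,
    fun _ hp => (Function.update_of_ne (ne_of_mem_of_not_mem hp hq) ..).symm⟩

theorem exists_interpolant [IsTrans α r]
    (hinterp : ∀ x y, P x → r x y → ∃ z, P z ∧ r x z ∧ r z y)
    (x : PartialRatChain r P) {q : ℚ} (hq0 : 0 < q) (hq1 : q < 1) :
    ∃ z, (∀ p ∈ x.support, 0 ≤ p → p < q → r (x.toFun p) z) ∧
      (∀ p ∈ x.support, q < p → p ≤ 1 → r z (x.toFun p)) ∧ P z := by
  set below := x.support.filter (fun p => 0 ≤ p ∧ p < q)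
  set above := x.support.filter (fun p => q < p ∧ p ≤ 1)
  have hbelow : below.Nonempty := ⟨0, Finset.mem_filter.2 ⟨x.zero_mem, le_rfl, hq0⟩⟩
  have habove : above.Nonempty := ⟨1, Finset.mem_filter.2 ⟨x.one_mem, hq1, le_rfl⟩⟩
  obtain ⟨hlo, hlo0, hloq⟩ := Finset.mem_filter.1 (below.max'_mem hbelow)
  obtain ⟨hhi, hqhi, hhi1⟩ := Finset.mem_filter.1 (above.min'_mem habove)
  obtain ⟨z, hz, hloz, hzhi⟩ := hinterp _ _ (x.pred _ hlo hlo0 (hloq.trans hq1))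
    (x.rel _ hlo _ hhi hlo0 (hloq.trans hqhi) hhi1)
  refine ⟨z, fun p hp hp0 hpq => ?_, fun p hp hqp hp1 => ?_, hz⟩
  · rcases (below.le_max' p (Finset.mem_filter.2 ⟨hp, hp0, hpq⟩)).eq_or_lt with hplo | hplo
    · rwa [hplo]
    · exact trans_of r (x.rel _ hp _ hlo hp0 hplo (hloq.trans hq1).le) hloz
  · rcases (above.min'_le p (Finset.mem_filter.2 ⟨hp, hqp, hp1⟩)).eq_or_lt with hhip | hhip
    · rwa [← hhip]
    · exact trans_of r hzhi (x.rel _ hhi _ hp (hq0.trans hqhi).le hhip hp1)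

theorem exists_le_mem_support [IsTrans α r]
    (hinterp : ∀ x y, P x → r x y → ∃ z, P z ∧ r x z ∧ r z y)
    (x : PartialRatChain r P) (q : ℚ) : ∃ y, q ∈ y.support ∧ x ≤ y := by
  by_cases hq : q ∈ x.support
  · exact ⟨x, hq, le_rfl⟩
  by_cases hq01 : 0 < q ∧ q < 1
  · obtain ⟨z, hlo, hhi, hz⟩ := exists_interpolant hinterp x hq01.1 hq01.2
    exact ⟨x.insert q hq z (fun p hp h0 hpq _ => hlo p hp h0 hpq)
      (fun p hp _ hqp h1 => hhi p hp hqp h1) (fun _ _ => hz),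
      Finset.mem_insert_self _ _, x.le_insert ..⟩
  · -- `q` lies outside `[0, 1]`, where the chain conditions are void
    have hq0 : q ≠ 0 := fun h => hq (h ▸ x.zero_mem)
    have hq1 : q ≠ 1 := fun h => hq (h ▸ x.one_mem)
    have hout : q < 0 ∨ 1 < q := by
      rcases lt_or_gt_of_ne hq0 with h | h
      · exact .inl h
      · exact .inr ((lt_or_gt_of_ne hq1).resolve_left fun h' => hq01 ⟨h, h'⟩)
    refine ⟨x.insert q hq (x.toFun q) (fun p _ h0 hpq h1 => ?_) (fun p _ h0 hqp h1 => ?_)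
      (fun h0 h1 => ?_), Finset.mem_insert_self _ _, x.le_insert ..⟩ <;>
      exfalso <;> rcases hout with h | h <;> linarith

end PartialRatChain

open PartialRatChain in
theorem exists_rat_chain {α : Type*} {r : α → α → Prop} {P : α → Prop} [IsTrans α r]
    (hinterp : ∀ x y, P x → r x y → ∃ z, P z ∧ r x z ∧ r z y) {a b : α} (ha : P a) (hab : r a b) :
    ∃ c : ℚ → α, c 0 = a ∧ c 1 = b ∧ ∀ p q : ℚ, 0 ≤ p → p < q → q ≤ 1 → r (c p) (c q) := by
  let D : ℚ → Order.Cofinal (PartialRatChain r P) := fun q =>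
    ⟨{x | q ∈ x.support}, fun x => exists_le_mem_support hinterp x q⟩
  let x₀ := pair r P ha hab
  let s := Order.sequenceOfCofinals x₀ D
  have hmono : Monotone s := Order.sequenceOfCofinals.monotone x₀ D
  have hmem (q : ℚ) : q ∈ (s (Encodable.encode q + 1)).support :=
    Order.sequenceOfCofinals.encode_mem x₀ D q
  have hstable {q : ℚ} {n : ℕ} (hn : Encodable.encode q + 1 ≤ n) :
      (s (Encodable.encode q + 1)).toFun q = (s n).toFun q :=
    toFun_eq_of_le (hmono hn) (hmem q)
  have hinit {q : ℚ} (hq : q ∈ x₀.support) : (s (Encodable.encode q + 1)).toFun q = x₀.toFun q :=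
    (toFun_eq_of_le (hmono (Nat.zero_le _)) hq).symm
  refine ⟨fun q => (s (Encodable.encode q + 1)).toFun q, ?_, ?_, fun p q hp0 hpq hq1 => ?_⟩
  · simpa [x₀, pair] using hinit x₀.zero_mem
  · simpa [x₀, pair] using hinit x₀.one_mem
  · set N := max (Encodable.encode p + 1) (Encodable.encode q + 1)
    dsimp only
    rw [hstable (le_max_left _ _), hstable (le_max_right _ _)]
    exact (s N).rel p ((hmono (le_max_left _ _)).1 (hmem p)) q
      ((hmono (le_max_right _ _)).1 (hmem q)) hp0 hpq hq1

theorem stmt12_general {A : Type*} [CompleteBooleanAlgebra A] (lhd : A → A → Prop) (I : Set A)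
    (dv1 : lhd ⊤ ⊤)
    (dv2 : ∀ a b : A, lhd a b → a ≤ b)
    (dv3 : ∀ a b c d : A, a ≤ b → lhd b c → c ≤ d → lhd a d)
    (i1 : ∀ a b : A, a ∈ I → lhd a b → ∃ c ∈ I, lhd a c ∧ lhd c b)
    (i3 : ∀ b : A, b ≠ ⊥ → ∃ a ∈ I, a ≠ ⊥ ∧ lhd a b)
    (prec : A → A → Prop)
    (hprec : ∀ a b : A, prec a b ↔ ∃ c : ℚ → A, a ≤ c 0 ∧ c 1 ≤ b ∧
      ∀ p q : ℚ, 0 ≤ p → p < q → q ≤ 1 → lhd (c p) (c q))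
    :
    (∀ a ∈ I, ∃ b ∈ I, prec a b) ∧ sSup I = ⊤ := by
  have : IsTrans A lhd := ⟨fun x y z hxy hyz => dv3 x y z z (dv2 x y hxy) hyz le_rfl⟩
  constructor
  · intro a ha
    obtain ⟨b, hb, hab, -⟩ := i1 a ⊤ ha (dv3 a ⊤ ⊤ ⊤ le_top dv1 le_rfl)
    obtain ⟨c, hc0, hc1, hc⟩ := exists_rat_chain i1 ha hab
    exact ⟨b, hb, (hprec a b).2 ⟨c, hc0.ge, hc1.le, hc⟩⟩
  · by_contra hI
    obtain ⟨a, ha, ha0, hal⟩ := i3 (sSup I)ᶜ (mt compl_eq_bot.1 hI)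
    have : a ≤ sSup I ⊓ (sSup I)ᶜ := le_inf (le_sSup ha) (dv2 _ _ hal)
    exact ha0 (le_bot_iff.1 (by simpa using this))

theorem stmt12 {A : Type*} [CompleteBooleanAlgebra A] (lhd : A → A → Prop) (I : Set A)
    (dv1 : lhd ⊤ ⊤)
    (dv2 : ∀ a b : A, lhd a b → a ≤ b)
    (dv3 : ∀ a b c d : A, a ≤ b → lhd b c → c ≤ d → lhd a d)
    (dv4 : ∀ a b c : A, lhd a b → lhd a c → lhd a (b ⊓ c))
    (dv5 : ∀ a b : A, lhd a b → lhd bᶜ aᶜ)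
    (hne : I.Nonempty)
    (hdown : ∀ a b : A, b ∈ I → a ≤ b → a ∈ I)
    (hjoin : ∀ a b : A, a ∈ I → b ∈ I → a ⊔ b ∈ I)
    (i1 : ∀ a b : A, a ∈ I → lhd a b → ∃ c ∈ I, lhd a c ∧ lhd c b)
    (i2 : ∀ a b : A, (∀ c ∈ I, lhd (a ⊓ c) (b ⊔ cᶜ)) → lhd a b)
    (i3 : ∀ b : A, b ≠ ⊥ → ∃ a ∈ I, a ≠ ⊥ ∧ lhd a b)
    (prec : A → A → Prop)
    (hprec : ∀ a b : A, prec a b ↔ ∃ c : ℚ → A, a ≤ c 0 ∧ c 1 ≤ b ∧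
      ∀ p q : ℚ, 0 ≤ p → p < q → q ≤ 1 → lhd (c p) (c q))
    :
    (∀ a ∈ I, ∃ b ∈ I, prec a b) ∧ sSup I = ⊤ :=
  stmt12_general lhd I dv1 dv2 dv3 i1 i3 prec hprec
end

section
/- Let (A, ◁, I) satisfy: A a Boolean algebra, ◁ a relation satisfying (DV1)–(DV5), I an ideal satisfying (I1), and let ρ : A → A' be a map into another such structure (A', ◁', I') satisfying (M1) ρ(0)=0, (M2) ρ(a∧b)=ρ(a)∧ρ(b), (D4): for c ∈ I' there is a ∈ I with c ≤ ρ(a), and the weak axiom (∗∗): a ∈ I and a ◁ b imply ¬ρ(¬a) ◁' ρ(b). If additionally (I2) holds in A' (if (x ∧ c) ◁' (y ∨ ¬c) for all c ∈ I' then x ◁' y), then the stronger axiom (D3) holds: a ◁ b implies ¬ρ(¬a) ◁' ρ(b). -/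
/-! By (I2) and (DV3) it suffices to show `¬ρ(¬a) ∧ c ◁' ρ(b)` for each `c ∈ I'`. Pick `d ∈ I`
with `c ≤ ρ(d)` by (D4). Then `a ∧ d ∈ I` and `a ∧ d ◁ b`, so (∗∗) gives `¬ρ(¬(a ∧ d)) ◁' ρ(b)`, and
`¬ρ(¬a) ∧ c ≤ ¬ρ(¬a) ∧ ρ(d) ≤ ¬ρ(¬(a ∧ d))` since `ρ` preserves meets. -/

section MeetPreserving

variable {α β : Type*} [BooleanAlgebra α] [BooleanAlgebra β]

lemma compl_inf_le_compl_of_inf_le {x y z : α} (h : z ⊓ y ≤ x) : xᶜ ⊓ y ≤ zᶜ := by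
  rw [le_compl_iff_disjoint_right, disjoint_iff_inf_le]
  calc xᶜ ⊓ y ⊓ z = z ⊓ y ⊓ xᶜ := by ac_rfl
    _ ≤ x ⊓ xᶜ := inf_le_inf_right _ h
    _ = ⊥ := inf_compl_eq_bot

lemma compl_map_compl_inf_map_le {ρ : α → β}
    (map_inf : ∀ a b, ρ (a ⊓ b) = ρ a ⊓ ρ b) (a d : α) :
    (ρ aᶜ)ᶜ ⊓ ρ d ≤ (ρ (a ⊓ d)ᶜ)ᶜ := by
  refine compl_inf_le_compl_of_inf_le ?_
  rw [← map_inf]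
  refine OrderHomClass.mono (InfHom.mk ρ map_inf) ?_
  rw [compl_inf, inf_sup_right, compl_inf_self, sup_bot_eq]
  exact inf_le_left

end MeetPreserving

theorem stmt19_general {A A' : Type*} [BooleanAlgebra A] [BooleanAlgebra A']
    (lhd : A → A → Prop) (I : Set A) (lhd' : A' → A' → Prop) (I' : Set A')
    (dv3 : ∀ a b c d : A, a ≤ b → lhd b c → c ≤ d → lhd a d)
    (hdown : ∀ a b : A, b ∈ I → a ≤ b → a ∈ I)
    (dv3' : ∀ a b c d : A', a ≤ b → lhd' b c → c ≤ d → lhd' a d)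
    (ρ : A → A')
    (m2 : ∀ a b : A, ρ (a ⊓ b) = ρ a ⊓ ρ b)
    (d4 : ∀ c ∈ I', ∃ a ∈ I, c ≤ ρ a)
    (wstar : ∀ a b : A, a ∈ I → lhd a b → lhd' ((ρ aᶜ)ᶜ) (ρ b))
    (i2' : ∀ x y : A', (∀ c ∈ I', lhd' (x ⊓ c) (y ⊔ cᶜ)) → lhd' x y) :
    ∀ a b : A, lhd a b → lhd' ((ρ aᶜ)ᶜ) (ρ b) := by
  intro a b hab
  refine i2' _ _ fun c hc => ?_
  obtain ⟨d, hdI, hcd⟩ := d4 c hc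
  have hweak : lhd' (ρ (a ⊓ d)ᶜ)ᶜ (ρ b) :=
    wstar _ _ (hdown _ d hdI inf_le_right) (dv3 _ a b b inf_le_left hab le_rfl)
  have hle : (ρ aᶜ)ᶜ ⊓ c ≤ (ρ (a ⊓ d)ᶜ)ᶜ :=
    (inf_le_inf_left _ hcd).trans (compl_map_compl_inf_map_le m2 a d)
  exact dv3' _ _ _ _ hle hweak le_sup_left

theorem stmt19 {A A' : Type*} [BooleanAlgebra A] [BooleanAlgebra A']
    (lhd : A → A → Prop) (I : Set A) (lhd' : A' → A' → Prop) (I' : Set A')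
    (dv1 : lhd ⊤ ⊤)
    (dv2 : ∀ a b : A, lhd a b → a ≤ b)
    (dv3 : ∀ a b c d : A, a ≤ b → lhd b c → c ≤ d → lhd a d)
    (dv4 : ∀ a b c : A, lhd a b → lhd a c → lhd a (b ⊓ c))
    (dv5 : ∀ a b : A, lhd a b → lhd bᶜ aᶜ)
    (hne : I.Nonempty)
    (hdown : ∀ a b : A, b ∈ I → a ≤ b → a ∈ I)
    (hjoin : ∀ a b : A, a ∈ I → b ∈ I → a ⊔ b ∈ I)
    (i1 : ∀ a b : A, a ∈ I → lhd a b → ∃ c ∈ I, lhd a c ∧ lhd c b)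
    (dv1' : lhd' ⊤ ⊤)
    (dv2' : ∀ a b : A', lhd' a b → a ≤ b)
    (dv3' : ∀ a b c d : A', a ≤ b → lhd' b c → c ≤ d → lhd' a d)
    (dv4' : ∀ a b c : A', lhd' a b → lhd' a c → lhd' a (b ⊓ c))
    (dv5' : ∀ a b : A', lhd' a b → lhd' bᶜ aᶜ)
    (hne' : I'.Nonempty)
    (hdown' : ∀ a b : A', b ∈ I' → a ≤ b → a ∈ I')
    (hjoin' : ∀ a b : A', a ∈ I' → b ∈ I' → a ⊔ b ∈ I')
    (ρ : A → A')
    (m1 : ρ ⊥ = ⊥)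
    (m2 : ∀ a b : A, ρ (a ⊓ b) = ρ a ⊓ ρ b)
    (d4 : ∀ c ∈ I', ∃ a ∈ I, c ≤ ρ a)
    (wstar : ∀ a b : A, a ∈ I → lhd a b → lhd' ((ρ aᶜ)ᶜ) (ρ b))
    (i2' : ∀ x y : A', (∀ c ∈ I', lhd' (x ⊓ c) (y ⊔ cᶜ)) → lhd' x y) :
    ∀ a b : A, lhd a b → lhd' ((ρ aᶜ)ᶜ) (ρ b) :=
  stmt19_general lhd I lhd' I' dv3 hdown dv3' ρ m2 d4 wstar i2'
end
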